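/- arXiv:1311.4178 — 2 statements merged into one kernel-verified Lean document; each statement's English description precedes it below -/
import Mathlib

section
/- Let Ω ⊂ ℝ² be a bounded domain, f ∈ L²(Ω), and B(p,Q) a bounded function on Ω×Ω. Define v(p) = ∫∫_Ω B(p,Q)/|p−Q| f(Q) dQ. Then there exists a constant C depending only on Ω and the bound of B such that for every measurable set D ⊂ Ω and every ε ∈ (0,1), ∫∫_D v(p)² dp ≤ (C/ε) |D|^{1−ε} ‖f‖²_{L²(Ω)}, where |D| denotes the Lebesgue measure of D. -/
/-!
Split the kernel as `|p - Q|⁻¹ = |p - Q| ^ (-(1 - ε/2)) * |p - Q| ^ (-ε/2)` and apply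
Cauchy–Schwarz in `Q`:
`v(p)² ≤ M² (∫_Ω |p - Q| ^ (ε - 2) dQ) (∫_Ω |p - Q| ^ (-ε) f(Q)² dQ)`.
In polar coordinates the first factor is at most `2π d^ε / ε` for `d > diam Ω`. Integrating the
second over `D` and exchanging the integrals leaves `∫_D |p - Q| ^ (-ε) dp`, which is bounded by
comparing `D` with the disc of radius `|D| ^ (1/2)` around `Q`: inside, the integral is
`≲ |D| ^ (1 - ε/2)`; outside, the integrand is at most `|D| ^ (-ε/2)`. Splitting at `ε/2`
rather than `ε` keeps this constant bounded as `ε → 1`, and the lost factor `|D| ^ (ε/2)` is at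
most `1 + |Ω|`.
-/

open MeasureTheory Metric Set Module Real
open scoped ENNReal

section SingularKernel

variable {X : Type*} [PseudoMetricSpace X] [MeasurableSpace X] [OpensMeasurableSpace X]
  {μ : Measure X}

theorem setLIntegral_sdiff_ball_edist_rpow_neg_le {a : ℝ} (ha : 0 ≤ a) {s : Set X}
    (hs : MeasurableSet s) (x : X) (ρ : ℝ) :
    ∫⁻ y in s \ ball x ρ, edist x y ^ (-a) ∂μ ≤ ENNReal.ofReal ρ ^ (-a) * μ s := by
  calc ∫⁻ y in s \ ball x ρ, edist x y ^ (-a) ∂μ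
      ≤ ∫⁻ _ in s \ ball x ρ, ENNReal.ofReal ρ ^ (-a) ∂μ := by
        refine setLIntegral_mono' (hs.diff measurableSet_ball) fun y hy => ?_
        rw [ENNReal.rpow_neg, ENNReal.rpow_neg, edist_dist]
        gcongr
        simpa [dist_comm] using hy.2
    _ ≤ ENNReal.ofReal ρ ^ (-a) * μ s := by
        rw [setLIntegral_const]
        gcongr
        exact sdiff_subset

theorem enorm_integral_div_dist_sq_le {p : X} {B f : X → ℝ} {K : ℝ≥0∞} (hB : ∀ Q, ‖B Q‖ₑ ≤ K)
    (hf : AEMeasurable f μ) {a b : ℝ} (ha : 0 ≤ a) (hb : 0 ≤ b) (hab : a + b = 2) :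
    ‖∫ Q, B Q / dist p Q * f Q ∂μ‖ₑ ^ 2 ≤
      K ^ 2 * ((∫⁻ Q, edist p Q ^ (-a) ∂μ) * ∫⁻ Q, edist p Q ^ (-b) * ‖f Q‖ₑ ^ 2 ∂μ) := by
  have h_kernel : ∀ Q, ‖B Q / dist p Q * f Q‖ₑ ≤
      K * ((edist p Q ^ (-a)) ^ (2⁻¹ : ℝ) * (edist p Q ^ (-b) * ‖f Q‖ₑ ^ 2) ^ (2⁻¹ : ℝ)) := by
    intro Q
    have hsplit : (edist p Q ^ (-a)) ^ (2⁻¹ : ℝ) * (edist p Q ^ (-b) * ‖f Q‖ₑ ^ 2) ^ (2⁻¹ : ℝ)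
        = (edist p Q)⁻¹ * ‖f Q‖ₑ := by
      simp only [ENNReal.mul_rpow_of_nonneg _ _ (inv_nonneg.2 zero_le_two : (0 : ℝ) ≤ 2⁻¹),
        ENNReal.rpow_neg, ← ENNReal.inv_rpow, ← ENNReal.rpow_mul, ← ENNReal.rpow_natCast]
      rw [← mul_assoc, ← ENNReal.rpow_add_of_nonneg _ _ (by positivity) (by positivity)]
      norm_num [← add_mul, hab]
    rw [hsplit, enorm_mul, ← mul_assoc]
    gcongr
    rcases eq_or_ne (dist p Q) 0 with h0 | h0
    · simp [h0] -- the real quotient `B Q / 0` is `0`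
    · rw [div_eq_mul_inv, enorm_mul, enorm_inv h0,
        Real.enorm_of_nonneg dist_nonneg, ← edist_dist]
      gcongr
      exact hB Q
  calc ‖∫ Q, B Q / dist p Q * f Q ∂μ‖ₑ ^ 2
      ≤ (∫⁻ Q, K * ((edist p Q ^ (-a)) ^ (2⁻¹ : ℝ) *
          (edist p Q ^ (-b) * ‖f Q‖ₑ ^ 2) ^ (2⁻¹ : ℝ)) ∂μ) ^ 2 := by
        gcongr
        exact (enorm_integral_le_lintegral_enorm _).trans (lintegral_mono h_kernel)
    _ ≤ (K * ((∫⁻ Q, edist p Q ^ (-a) ∂μ) ^ (2⁻¹ : ℝ) *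
          (∫⁻ Q, edist p Q ^ (-b) * ‖f Q‖ₑ ^ 2 ∂μ) ^ (2⁻¹ : ℝ))) ^ 2 := by
        rw [lintegral_const_mul'' _ (by fun_prop)]
        gcongr
        exact ENNReal.lintegral_mul_norm_pow_le (by fun_prop) (by fun_prop) (by norm_num)
          (by norm_num) (by norm_num)
    _ = _ := by
        simp only [mul_pow, ← ENNReal.rpow_natCast, ← ENNReal.rpow_mul]
        norm_num

theorem setLIntegral_enorm_integral_div_dist_sq_le [SecondCountableTopology X] [SFinite μ]
    {Ω D : Set X} (hD : MeasurableSet D) {B : X → X → ℝ} {K : ℝ≥0∞} (hB : ∀ p Q, ‖B p Q‖ₑ ≤ K)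
    {f : X → ℝ} (hf : AEMeasurable f (μ.restrict Ω)) {a b : ℝ} (ha : 0 ≤ a) (hb : 0 ≤ b)
    (hab : a + b = 2) {α β : ℝ≥0∞} (hα : ∀ p ∈ D, ∫⁻ Q in Ω, edist p Q ^ (-a) ∂μ ≤ α)
    (hβ : ∀ Q, ∫⁻ p in D, edist Q p ^ (-b) ∂μ ≤ β) :
    ∫⁻ p in D, ‖∫ Q in Ω, B p Q / dist p Q * f Q ∂μ‖ₑ ^ 2 ∂μ ≤
      K ^ 2 * α * β * ∫⁻ Q in Ω, ‖f Q‖ₑ ^ 2 ∂μ := by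
  calc ∫⁻ p in D, ‖∫ Q in Ω, B p Q / dist p Q * f Q ∂μ‖ₑ ^ 2 ∂μ
      ≤ ∫⁻ p in D, ∫⁻ Q in Ω, K ^ 2 * α * (edist p Q ^ (-b) * ‖f Q‖ₑ ^ 2) ∂μ ∂μ := by
        refine setLIntegral_mono' hD fun p hp => ?_
        rw [lintegral_const_mul'' _ (by fun_prop), mul_assoc]
        refine (enorm_integral_div_dist_sq_le (hB p) hf ha hb hab).trans ?_
        gcongr
        exact hα p hp
    _ = ∫⁻ Q in Ω, K ^ 2 * α * (∫⁻ p in D, edist Q p ^ (-b) ∂μ) * ‖f Q‖ₑ ^ 2 ∂μ := by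
        rw [lintegral_lintegral_swap (by fun_prop)]
        refine lintegral_congr fun Q => ?_
        simp_rw [edist_comm _ Q]
        rw [lintegral_const_mul _ (by fun_prop), lintegral_mul_const _ (by fun_prop)]
        ring
    _ ≤ ∫⁻ Q in Ω, K ^ 2 * α * β * ‖f Q‖ₑ ^ 2 ∂μ := by
        gcongr with Q
        exact hβ Q
    _ = K ^ 2 * α * β * ∫⁻ Q in Ω, ‖f Q‖ₑ ^ 2 ∂μ := lintegral_const_mul'' _ (by fun_prop)

theorem setIntegral_sq_integral_div_dist_le [SecondCountableTopology X] [SFinite μ]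
    {Ω D : Set X} (hD : MeasurableSet D) {B : X → X → ℝ} {M : ℝ} (hB : ∀ p Q, |B p Q| ≤ M)
    {f : X → ℝ} (hf : MemLp f 2 (μ.restrict Ω)) {a b : ℝ} (ha : 0 ≤ a) (hb : 0 ≤ b)
    (hab : a + b = 2) {α β : ℝ} (hα₀ : 0 ≤ α) (hβ₀ : 0 ≤ β)
    (hα : ∀ p ∈ D, ∫⁻ Q in Ω, edist p Q ^ (-a) ∂μ ≤ ENNReal.ofReal α)
    (hβ : ∀ Q, ∫⁻ p in D, edist Q p ^ (-b) ∂μ ≤ ENNReal.ofReal β) :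
    ∫ p in D, (∫ Q in Ω, B p Q / dist p Q * f Q ∂μ) ^ 2 ∂μ ≤
      M ^ 2 * α * β * ∫ Q in Ω, f Q ^ 2 ∂μ := by
  have hK : ∀ p Q, ‖B p Q‖ₑ ≤ ‖M‖ₑ := fun p Q => by
    simp only [Real.enorm_eq_ofReal_abs]
    exact ENNReal.ofReal_le_ofReal ((hB p Q).trans (le_abs_self M))
  have hf_sq : ∫ Q in Ω, f Q ^ 2 ∂μ = (∫⁻ Q in Ω, ‖f Q‖ₑ ^ 2 ∂μ).toReal := by
    simpa [enorm_pow] using integral_norm_eq_lintegral_enorm hf.integrable_sq.1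
  have hf_fin : ∫⁻ Q in Ω, ‖f Q‖ₑ ^ 2 ∂μ ≠ ⊤ := by
    simpa [enorm_pow] using hf.integrable_sq.2.ne
  calc ∫ p in D, (∫ Q in Ω, B p Q / dist p Q * f Q ∂μ) ^ 2 ∂μ
      ≤ (∫⁻ p in D, ‖∫ Q in Ω, B p Q / dist p Q * f Q ∂μ‖ₑ ^ 2 ∂μ).toReal := by
        refine (Real.le_norm_self _).trans ?_
        simpa only [ofReal_norm, enorm_pow] using
          norm_integral_le_lintegral_norm (μ := μ.restrict D)
            fun p => (∫ Q in Ω, B p Q / dist p Q * f Q ∂μ) ^ (2 : ℕ)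
    _ ≤ (‖M‖ₑ ^ 2 * ENNReal.ofReal α * ENNReal.ofReal β * ∫⁻ Q in Ω, ‖f Q‖ₑ ^ 2 ∂μ).toReal :=
        ENNReal.toReal_mono (by finiteness)
          (setLIntegral_enorm_integral_div_dist_sq_le hD hK hf.1.aemeasurable ha hb hab hα hβ)
    _ = M ^ 2 * α * β * ∫ Q in Ω, f Q ^ 2 ∂μ := by
        simp [hf_sq, ENNReal.toReal_ofReal, hα₀, hβ₀]

end SingularKernel

section RieszKernel

variable {E : Type*} [NormedAddCommGroup E] [NormedSpace ℝ E] [FiniteDimensional ℝ E]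
  [MeasurableSpace E] [BorelSpace E] [Nontrivial E] (μ : Measure E) [μ.IsAddHaarMeasure]

theorem integral_ball_zero_norm_rpow_neg {a r : ℝ} (ha : a < finrank ℝ E) (hr : 0 ≤ r) :
    ∫ x in ball 0 r, ‖x‖ ^ (-a) ∂μ =
      finrank ℝ E * μ.real (ball 0 1) * (r ^ (finrank ℝ E - a) / (finrank ℝ E - a)) := by
  have hpos : (0 : ℝ) < finrank ℝ E - a := by linarith
  have hball : ∫ x in ball 0 r, ‖x‖ ^ (-a) ∂μ = ∫ x, (Iio r).indicator (· ^ (-a)) ‖x‖ ∂μ := by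
    rw [← integral_indicator measurableSet_ball]
    congr 1 with x
    by_cases hx : ‖x‖ < r <;> simp [indicator, hx]
  have hradial : ∫ y in Ioi (0 : ℝ), y ^ (finrank ℝ E - 1) • (Iio r).indicator (· ^ (-a)) y =
      ∫ y in (0)..r, y ^ (finrank ℝ E - a - 1) := by
    rw [intervalIntegral.integral_of_le hr, integral_Ioc_eq_integral_Ioo, ← Ioi_inter_Iio,
      ← setIntegral_indicator measurableSet_Iio]
    refine setIntegral_congr_fun measurableSet_Ioi fun y (hy : 0 < y) => ?_
    by_cases hyr : y < r
    · simp only [indicator, mem_Iio, hyr, if_true, smul_eq_mul]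
      rw [← Real.rpow_natCast, ← Real.rpow_add hy]
      push_cast [Nat.cast_sub finrank_pos]
      ring_nf
    · simp [indicator, hyr]
  rw [hball, integral_fun_norm_addHaar, hradial, integral_rpow (Or.inl (by linarith))]
  simp only [sub_add_cancel, nsmul_eq_mul, smul_eq_mul]
  rw [Real.zero_rpow hpos.ne', sub_zero]
  ring

theorem lintegral_ball_zero_enorm_rpow_neg {a r : ℝ} (ha : a < finrank ℝ E) (hr : 0 ≤ r) :
    ∫⁻ x in ball 0 r, ‖x‖ₑ ^ (-a) ∂μ =
      ENNReal.ofReal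
        (finrank ℝ E * μ.real (ball 0 1) * (r ^ (finrank ℝ E - a) / (finrank ℝ E - a))) := by
  have hint : IntegrableOn (fun x : E => ‖x‖ ^ (-a)) (ball 0 r) μ :=
    integrableOn_ball_of_norm_le_rpow (C := 1) finrank_pos ha
      (ae_of_all _ fun x => by simp [abs_of_nonneg (Real.rpow_nonneg (norm_nonneg x) _)])
      (measurable_norm.pow_const _).aestronglyMeasurable
  rw [← integral_ball_zero_norm_rpow_neg μ ha hr,
    ofReal_integral_eq_lintegral_ofReal hint (ae_of_all _ fun x => by positivity)]
  refine lintegral_congr_ae (ae_restrict_of_ae ?_)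
  filter_upwards [compl_mem_ae_iff.2 (measure_singleton (0 : E))] with x (hx : x ≠ 0)
  rw [← ofReal_norm, ENNReal.ofReal_rpow_of_pos (norm_pos_iff.2 hx)]

theorem lintegral_ball_edist_rpow_neg {a r : ℝ} (ha : a < finrank ℝ E) (hr : 0 ≤ r) (x : E) :
    ∫⁻ y in ball x r, edist x y ^ (-a) ∂μ =
      ENNReal.ofReal
        (finrank ℝ E * μ.real (ball 0 1) * (r ^ (finrank ℝ E - a) / (finrank ℝ E - a))) := by
  rw [← lintegral_ball_zero_enorm_rpow_neg μ ha hr, ← lintegral_indicator measurableSet_ball,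
    ← lintegral_indicator measurableSet_ball,
    ← lintegral_sub_right_eq_self ((ball (0 : E) r).indicator (‖·‖ₑ ^ (-a))) x]
  congr 1 with y
  simp only [indicator, mem_ball, dist_eq_norm, sub_zero, edist_comm x, edist_eq_enorm_sub]

theorem setLIntegral_edist_rpow_neg_le_measure {a : ℝ} (ha₀ : 0 ≤ a) (ha : a < finrank ℝ E)
    {s : Set E} (hs : MeasurableSet s) (hμs : μ s ≠ ⊤) (x : E) :
    ∫⁻ y in s, edist x y ^ (-a) ∂μ ≤ ENNReal.ofReal ((finrank ℝ E * μ.real (ball 0 1) /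
      (finrank ℝ E - a) + 1) * μ.real s ^ (1 - a / finrank ℝ E)) := by
  set n : ℝ := (finrank ℝ E : ℝ)
  set m := μ.real s
  have hn : 0 < n := Nat.cast_pos.2 finrank_pos
  have hna : 0 < n - a := by linarith
  rcases eq_or_ne (μ s) 0 with hs0 | hs0
  · simp [Measure.restrict_eq_zero.2 hs0]
  have hm : 0 < m := ENNReal.toReal_pos hs0 hμs
  set ρ := m ^ n⁻¹
  have hρ : 0 < ρ := by positivity
  have hρ_ball : ρ ^ (n - a) = m ^ (1 - a / n) := by
    rw [← Real.rpow_mul hm.le]; congr 1; field_simp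
  have hρ_out : ρ ^ (-a) * m = m ^ (1 - a / n) := by
    rw [← Real.rpow_mul hm.le, ← Real.rpow_add_one hm.ne']; congr 1; field_simp; ring
  have h_out : ∫⁻ y in s \ ball x ρ, edist x y ^ (-a) ∂μ ≤ ENNReal.ofReal (m ^ (1 - a / n)) := by
    refine (setLIntegral_sdiff_ball_edist_rpow_neg_le ha₀ hs x ρ).trans_eq ?_
    rw [ENNReal.ofReal_rpow_of_pos hρ, ← ofReal_measureReal hμs, ← ENNReal.ofReal_mul
      (by positivity), hρ_out]
  calc ∫⁻ y in s, edist x y ^ (-a) ∂μ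
      ≤ ∫⁻ y in ball x ρ ∪ s \ ball x ρ, edist x y ^ (-a) ∂μ :=
        lintegral_mono_set (by rw [union_sdiff_self]; exact subset_union_right)
    _ ≤ (∫⁻ y in ball x ρ, edist x y ^ (-a) ∂μ) + ∫⁻ y in s \ ball x ρ, edist x y ^ (-a) ∂μ :=
        lintegral_union_le _ _ _
    _ ≤ ENNReal.ofReal (n * μ.real (ball 0 1) * (m ^ (1 - a / n) / (n - a)))
          + ENNReal.ofReal (m ^ (1 - a / n)) := by
        rw [lintegral_ball_edist_rpow_neg μ ha hρ.le, hρ_ball]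
        gcongr
    _ = _ := by
        rw [← ENNReal.ofReal_add (by positivity) (by positivity)]
        congr 1
        ring

theorem setLIntegral_edist_rpow_neg_le_diam {a : ℝ} (ha : a < finrank ℝ E) {s : Set E}
    (hs : Bornology.IsBounded s) {x : E} (hx : x ∈ s) :
    ∫⁻ y in s, edist x y ^ (-a) ∂μ ≤ ENNReal.ofReal (finrank ℝ E * μ.real (ball 0 1) *
      ((diam s + 1) ^ (finrank ℝ E - a) / (finrank ℝ E - a))) := by
  rw [← lintegral_ball_edist_rpow_neg μ ha (by positivity)]
  exact lintegral_mono_set fun y hy =>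
    mem_ball'.2 ((dist_le_diam_of_mem hs hx hy).trans_lt (lt_add_one _))

end RieszKernel

theorem Real.rpow_le_one_add_mul_rpow {x y s t : ℝ} (hx : 0 ≤ x) (hxy : x ≤ y) (hs : 0 < s)
    (hst : s ≤ t) (hts : t ≤ s + 1) : x ^ t ≤ (1 + y) * x ^ s := by
  have h_small : x ^ (t - s) ≤ 1 + x := by
    rcases le_or_gt x 1 with hx₁ | hx₁
    · linarith [Real.rpow_le_one hx hx₁ (sub_nonneg.2 hst)]
    · linarith [Real.rpow_one x ▸ Real.rpow_le_rpow_of_exponent_le hx₁.le (by linarith : t - s ≤ 1)]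
  rw [← sub_add_cancel t s, Real.rpow_add' hx (by linarith)]
  gcongr
  linarith

theorem stmt_0_general (Ω : Set (EuclideanSpace ℝ (Fin 2)))
    (hΩb : Bornology.IsBounded Ω) (M : ℝ) :
    ∃ C : ℝ, 0 < C ∧
      ∀ (f : EuclideanSpace ℝ (Fin 2) → ℝ)
        (B : EuclideanSpace ℝ (Fin 2) → EuclideanSpace ℝ (Fin 2) → ℝ)
        (v : EuclideanSpace ℝ (Fin 2) → ℝ),
        MemLp f 2 (volume.restrict Ω) →
        Measurable (Function.uncurry B) →
        (∀ p Q, |B p Q| ≤ M) →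
        (∀ p, v p = ∫ Q in Ω, B p Q / dist p Q * f Q) →
        ∀ D : Set (EuclideanSpace ℝ (Fin 2)), D ⊆ Ω → MeasurableSet D →
        ∀ ε : ℝ, ε ∈ Set.Ioo (0:ℝ) 1 →
          ∫ p in D, (v p) ^ 2 ≤
            C / ε * (volume D).toReal ^ (1 - ε) * ∫ Q in Ω, (f Q) ^ 2 := by
  set d := diam Ω + 1
  have hd : 1 ≤ d := by linarith [diam_nonneg (s := Ω)]
  refine ⟨2 * π * d * (2 * π + 1) * (1 + volume.real Ω) * (M ^ 2 + 1), by positivity,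
    fun f B v hf _ hB hv D hD hDm ε ⟨hε₀, hε₁⟩ => ?_⟩
  have h_ball : volume.real (ball (0 : EuclideanSpace ℝ (Fin 2)) 1) = π := by
    simp [Measure.real, pi_pos.le]
  have hα : ∀ p ∈ D, ∫⁻ Q in Ω, edist p Q ^ (-(2 - ε)) ≤ ENNReal.ofReal (2 * π * (d ^ ε / ε)) :=
    fun p hp => by
      simpa [h_ball] using
        setLIntegral_edist_rpow_neg_le_diam volume (a := 2 - ε) (by simp; linarith) hΩb (hD hp)
  have hβ : ∀ Q, ∫⁻ p in D, edist Q p ^ (-ε) ≤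
      ENNReal.ofReal ((2 * π / (2 - ε) + 1) * volume.real D ^ (1 - ε / 2)) := fun Q => by
    simpa [h_ball] using setLIntegral_edist_rpow_neg_le_measure volume hε₀.le
      (by simp; linarith) hDm (measure_mono hD |>.trans_lt hΩb.measure_lt_top).ne Q
  have h_d : d ^ ε ≤ d := by simpa using Real.rpow_le_rpow_of_exponent_le hd hε₁.le
  have h_π : 2 * π / (2 - ε) ≤ 2 * π := div_le_self (by positivity) (by linarith)
  have h_vol : volume.real D ^ (1 - ε / 2) ≤ (1 + volume.real Ω) * volume.real D ^ (1 - ε) :=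
    Real.rpow_le_one_add_mul_rpow measureReal_nonneg (measureReal_mono hD hΩb.measure_lt_top.ne)
      (by linarith) (by linarith) (by linarith)
  have hβ₀ : 0 ≤ (2 * π / (2 - ε) + 1) * volume.real D ^ (1 - ε / 2) := by
    have : 0 < 2 - ε := by linarith
    positivity
  have hI : 0 ≤ ∫ Q in Ω, f Q ^ 2 := integral_nonneg fun _ => sq_nonneg _
  simp_rw [hv]
  calc ∫ p in D, (∫ Q in Ω, B p Q / dist p Q * f Q) ^ 2
      ≤ M ^ 2 * (2 * π * (d ^ ε / ε)) * ((2 * π / (2 - ε) + 1) * volume.real D ^ (1 - ε / 2))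
          * ∫ Q in Ω, f Q ^ 2 :=
        setIntegral_sq_integral_div_dist_le hDm hB hf (by linarith) hε₀.le (by ring)
          (by positivity) hβ₀ hα hβ
    _ ≤ (M ^ 2 + 1) * (2 * π * (d / ε)) * ((2 * π + 1) * ((1 + volume.real Ω) *
          volume.real D ^ (1 - ε))) * ∫ Q in Ω, f Q ^ 2 := by
        gcongr
        linarith
    _ = _ := by
        simp only [measureReal_def]
        ring

/-- Lemma 1: the singular integral operator with kernel `B(p,Q)/|p-Q|` maps `L²(Ω)` into
functions whose `L²` mass on a measurable set `D ⊆ Ω` is bounded by `(C/ε)|D|^{1-ε}‖f‖²`. -/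
theorem stmt_0 (Ω : Set (EuclideanSpace ℝ (Fin 2))) (hΩm : MeasurableSet Ω)
    (hΩb : Bornology.IsBounded Ω) (M : ℝ) :
    ∃ C : ℝ, 0 < C ∧
      ∀ (f : EuclideanSpace ℝ (Fin 2) → ℝ)
        (B : EuclideanSpace ℝ (Fin 2) → EuclideanSpace ℝ (Fin 2) → ℝ)
        (v : EuclideanSpace ℝ (Fin 2) → ℝ),
        MemLp f 2 (volume.restrict Ω) →
        Measurable (Function.uncurry B) →
        (∀ p Q, |B p Q| ≤ M) →
        (∀ p, v p = ∫ Q in Ω, B p Q / dist p Q * f Q) →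
        ∀ D : Set (EuclideanSpace ℝ (Fin 2)), D ⊆ Ω → MeasurableSet D →
        ∀ ε : ℝ, ε ∈ Set.Ioo (0:ℝ) 1 →
          ∫ p in D, (v p) ^ 2 ≤
            C / ε * (volume D).toReal ^ (1 - ε) * ∫ Q in Ω, (f Q) ^ 2 :=
  stmt_0_general Ω hΩb M
end

section
/- Let K ⊂ ℝ² be a triangle with vertices p₁, p₂, p₃, and let u ∈ C²(K). For p ∈ K let L_i(p) be the barycentric coordinates and u_I the linear interpolant of u at the vertices. Setting M_i(t) = p_i + t(p − p_i), one has the exact representation u(p) − u_I(p) = −Σ_{i=1}^{3} L_i(p) ∫₀¹ t (d²/dt²) u(M_i(t)) dt. -/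
/-!
Along each segment `Mᵢ(t) = pᵢ + t (q - pᵢ)` from a vertex to `q`, integrating by parts gives
`u q - u pᵢ = Du(q)(q - pᵢ) - ∫₀¹ t (d²/dt²) u(Mᵢ(t)) dt`. Averaging with the barycentric weights
`Lᵢ(q)`, which sum to `1` and reproduce `q`, the first-order terms add up to
`Du(q)(∑ᵢ Lᵢ(q) (q - pᵢ)) = Du(q)(0) = 0`, leaving the interpolation error as the weighted remainders.
-/

open Set intervalIntegral

theorem sub_eq_deriv_sub_integral_mul_iteratedDeriv_two {f : ℝ → ℝ} (hf : ContDiff ℝ 2 f) :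
    f 1 - f 0 = deriv f 1 - ∫ t in (0:ℝ)..1, t * iteratedDeriv 2 f t := by
  have hf' : ContDiff ℝ 1 (deriv f) :=
    ((contDiff_succ_iff_deriv (n := 1)).mp (by exact_mod_cast hf)).2.2
  have hf'' : Continuous (deriv (deriv f)) :=
    ((contDiff_succ_iff_deriv (n := 0)).mp hf').2.2.continuous
  have by_parts : ∫ t in (0:ℝ)..1, t * deriv (deriv f) t
      = 1 * deriv f 1 - 0 * deriv f 0 - ∫ t in (0:ℝ)..1, 1 * deriv f t :=
    integral_mul_deriv_eq_deriv_mul (fun x _ => hasDerivAt_id x)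
      (fun x _ => (hf'.differentiable one_ne_zero x).hasDerivAt)
      intervalIntegrable_const (hf''.intervalIntegrable 0 1)
  have fundamental : ∫ t in (0:ℝ)..1, deriv f t = f 1 - f 0 :=
    integral_deriv_eq_sub (fun x _ => hf.differentiable two_ne_zero x)
      (hf'.continuous.intervalIntegrable 0 1)
  rw [iteratedDeriv_succ, iteratedDeriv_one, by_parts]
  simp only [one_mul, zero_mul, fundamental]
  ring

theorem AffineBasis.eq_coord_of_apply_eq_ite {ι k V P : Type*} [Ring k] [AddCommGroup V]
    [Module k V] [AddTorsor V P] [DecidableEq ι] (b : AffineBasis ι k P) {L : ι → P →ᵃ[k] k}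
    (hL : ∀ i j, L i (b j) = if i = j then 1 else 0) (i : ι) : L i = b.coord i :=
  AffineMap.ext_on b.tot <| by
    rintro - ⟨j, rfl⟩
    rw [hL, b.coord_apply]

section Segment

variable {E : Type*} [NormedAddCommGroup E] [NormedSpace ℝ E]

theorem deriv_comp_add_smul_one {u : E → ℝ} {a q : E} (hu : DifferentiableAt ℝ u q) :
    deriv (fun s : ℝ => u (a + s • (q - a))) 1 = fderiv ℝ u q (q - a) := by
  have hline : HasDerivAt (fun s : ℝ => a + s • (q - a)) (q - a) 1 := by
    simpa using ((hasDerivAt_id (1:ℝ)).smul_const (q - a)).const_add a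
  have hu' : HasFDerivAt u (fderiv ℝ u q) (a + (1:ℝ) • (q - a)) := by
    rw [one_smul, add_sub_cancel]
    exact hu.hasFDerivAt
  exact (hu'.comp_hasDerivAt 1 hline).deriv

theorem sum_smul_sub_eq_zero {ι : Type*} [Fintype ι] {p : ι → E} {w : ι → ℝ} {q : E}
    (hw : ∑ i, w i = 1) (hq : ∑ i, w i • p i = q) : ∑ i, w i • (q - p i) = 0 := by
  simp only [smul_sub, Finset.sum_sub_distrib, ← Finset.sum_smul, hw, one_smul, hq, sub_self]

theorem sub_sum_mul_eq_neg_sum_mul_integral {ι : Type*} [Fintype ι] {u : E → ℝ}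
    (hu : ContDiff ℝ 2 u) {p : ι → E} {w : ι → ℝ} {q : E}
    (hw : ∑ i, w i = 1) (hq : ∑ i, w i • p i = q) :
    u q - ∑ i, w i * u (p i) =
      -∑ i, w i * ∫ t in (0:ℝ)..1, t * iteratedDeriv 2 (fun s => u (p i + s • (q - p i))) t := by
  have taylor (i : ι) :=
    sub_eq_deriv_sub_integral_mul_iteratedDeriv_two (f := fun s => u (p i + s • (q - p i)))
      (hu.comp (contDiff_const.add (contDiff_id.smul contDiff_const)))
  simp only [one_smul, add_sub_cancel, zero_smul, add_zero,
    deriv_comp_add_smul_one (hu.differentiable two_ne_zero q)] at taylor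
  have first_order_vanishes : ∑ i, w i * fderiv ℝ u q (q - p i) = 0 := by
    simp only [← smul_eq_mul, ← map_smul, ← map_sum, sum_smul_sub_eq_zero hw hq, map_zero]
  calc u q - ∑ i, w i * u (p i) = ∑ i, w i * (u q - u (p i)) := by
        simp only [mul_sub, Finset.sum_sub_distrib, ← Finset.sum_mul, hw, one_mul]
    _ = _ := by
        simp only [taylor, mul_sub, Finset.sum_sub_distrib, first_order_vanishes, zero_sub]

end Segment

theorem stmt_6_general (p : Fin 3 → EuclideanSpace ℝ (Fin 2)) (hp : AffineIndependent ℝ p)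
    (L : Fin 3 → (EuclideanSpace ℝ (Fin 2) →ᵃ[ℝ] ℝ))
    (hL : ∀ i j, L i (p j) = if i = j then 1 else 0)
    (u : EuclideanSpace ℝ (Fin 2) → ℝ) (hu : ContDiff ℝ 2 u)
    (q : EuclideanSpace ℝ (Fin 2)) :
    u q - ∑ i, L i q * u (p i) =
      -∑ i, L i q *
        ∫ t in (0:ℝ)..1, t * iteratedDeriv 2 (fun s => u (p i + s • (q - p i))) t := by
  have hspan : affineSpan ℝ (range p) = ⊤ := by
    rw [hp.affineSpan_eq_top_iff_card_eq_finrank_add_one]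
    simp
  let b : AffineBasis (Fin 3) ℝ (EuclideanSpace ℝ (Fin 2)) := ⟨p, hp, hspan⟩
  have hLb : ∀ i, L i = b.coord i := b.eq_coord_of_apply_eq_ite hL
  refine sub_sum_mul_eq_neg_sum_mul_integral hu ?_ ?_
  · simpa only [hLb] using b.sum_coord_apply_eq_one q
  · simp only [hLb]
    exact b.linear_combination_coord_eq_self q

/-- Exact Taylor representation of the linear interpolation error on a triangle:
`u(p) - u_I(p) = -∑ᵢ Lᵢ(p) ∫₀¹ t (d²/dt²) u(Mᵢ(t)) dt`, with `Mᵢ(t) = pᵢ + t(p - pᵢ)`. -/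
theorem stmt_6 (p : Fin 3 → EuclideanSpace ℝ (Fin 2)) (hp : AffineIndependent ℝ p)
    (L : Fin 3 → (EuclideanSpace ℝ (Fin 2) →ᵃ[ℝ] ℝ))
    (hL : ∀ i j, L i (p j) = if i = j then 1 else 0)
    (u : EuclideanSpace ℝ (Fin 2) → ℝ) (hu : ContDiff ℝ 2 u)
    (q : EuclideanSpace ℝ (Fin 2)) (hq : q ∈ convexHull ℝ (Set.range p)) :
    u q - ∑ i, L i q * u (p i) =
      -∑ i, L i q *
        ∫ t in (0:ℝ)..1, t * iteratedDeriv 2 (fun s => u (p i + s • (q - p i))) t :=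
  stmt_6_general p hp L hL u hu q
end
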